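/- Let w ≤ -1 be an integer, let S be a combinatorial w-Hom configuration, let s ∈ S, and let U be a set of d-admissible arcs with U ∩ (S \ {s}) = ∅ such that (S \ {s}) ∪ U is a combinatorial w-Hom configuration. Then U consists of exactly one arc. -/
import Mathlib


open Set

/-- An arc of the `∞`-gon: a pair of integers `(t, u)`, source `t`, target `u`. -/
abbrev Arc := ℤ × ℤ

/-- `(t,u)` is `d`-admissible for `d = w - 1`: `u - t ≤ w` and `u - t ≡ 1 (mod d)`. -/
def IsAdmissible (w : ℤ) (a : Arc) : Prop :=
  a.2 - a.1 ≤ w ∧ (w - 1) ∣ (a.2 - a.1 - 1)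

/-- `p` is an endpoint of the arc `a`. -/
def IsEndpoint (p : ℤ) (a : Arc) : Prop := p = a.1 ∨ p = a.2

/-- `b = (v,x)` is an overarc of `a = (t,u)` if `x < u < t < v`. -/
def OverarcOf (b a : Arc) : Prop := b.2 < a.2 ∧ a.2 < a.1 ∧ a.1 < b.1

/-- `b = (v,x)` is an overarc of the integer `p` if `x < p < v`. -/
def OverarcOfVertex (b : Arc) (p : ℤ) : Prop := b.2 < p ∧ p < b.1

/-- Arcs `a` and `b` share an endpoint. -/
def SharesEndpoint (a b : Arc) : Prop :=
  a.1 = b.1 ∨ a.1 = b.2 ∨ a.2 = b.1 ∨ a.2 = b.2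

/-- Arcs `a = (t,u)` and `b = (v,x)` strictly cross: `u < x < t < v` or `x < u < v < t`. -/
def StrictCross (a b : Arc) : Prop :=
  (a.2 < b.2 ∧ b.2 < a.1 ∧ a.1 < b.1) ∨ (b.2 < a.2 ∧ a.2 < b.1 ∧ b.1 < a.1)

/-- Two arcs cross if they share an endpoint or strictly cross. -/
def Cross (a b : Arc) : Prop := SharesEndpoint a b ∨ StrictCross a b

/-- `p` is isolated with respect to `X` if it is an endpoint of no arc of `X`. -/
def Isolated (X : Set Arc) (p : ℤ) : Prop := ∀ a ∈ X, ¬ IsEndpoint p a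

/-- `p` is an inner-isolated vertex of the arc `b` with respect to `X`: `p` is isolated,
`b` is an overarc of `p`, and no arc of `X` of which `b` is an overarc is an overarc of `p`. -/
def InnerIsolatedOf (X : Set Arc) (b : Arc) (p : ℤ) : Prop :=
  Isolated X p ∧ OverarcOfVertex b p ∧ ∀ c ∈ X, OverarcOf b c → ¬ OverarcOfVertex c p

/-- `p` is an outer-isolated vertex of `X`: isolated with no overarc in `X`. -/
def OuterIsolated (X : Set Arc) (p : ℤ) : Prop :=
  Isolated X p ∧ ∀ b ∈ X, ¬ OverarcOfVertex b p

/-- A combinatorial `w`-Hom configuration: a set of `d`-admissible arcs (`d = w - 1`),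
pairwise noncrossing, such that every arc has exactly `|w| - 1` inner-isolated vertices
and there are at most `|w|` outer-isolated vertices. -/
def IsHomConfig (w : ℤ) (S : Set Arc) : Prop :=
  (∀ a ∈ S, IsAdmissible w a) ∧
  (∀ a ∈ S, ∀ b ∈ S, a ≠ b → ¬ Cross a b) ∧
  (∀ a ∈ S, {p : ℤ | InnerIsolatedOf S a p}.encard = ((-w - 1).toNat : ℕ∞)) ∧
  {p : ℤ | OuterIsolated S p}.encard ≤ ((-w).toNat : ℕ∞)

/-- A combinatorial `w`-Riedtmann configuration: a `w`-Hom configuration with at most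
`|w| - 1` outer-isolated vertices. -/
def IsRiedtmann (w : ℤ) (S : Set Arc) : Prop :=
  IsHomConfig w S ∧ {p : ℤ | OuterIsolated S p}.encard ≤ ((-w - 1).toNat : ℕ∞)

/-- A combinatorial `w`-simple-minded system: a `w`-Riedtmann configuration in which
every arc has an overarc. -/
def IsSMS (w : ℤ) (S : Set Arc) : Prop :=
  IsRiedtmann w S ∧ ∀ a ∈ S, ∃ b ∈ S, OverarcOf b a

/-- `t` is a replacement of `s` in the `w`-Hom configuration `S`. -/
def IsReplacement (w : ℤ) (S : Set Arc) (s t : Arc) : Prop :=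
  t ≠ s ∧ IsHomConfig w ((S \ {s}) ∪ {t})

/-- `c` is a Ptolemy arc of class I associated to the strictly crossing arcs `a` and `b`:
one of the four arcs joining an endpoint of `a` to an endpoint of `b`. -/
def IsPtolemyI (a b c : Arc) : Prop :=
  StrictCross a b ∧ c.2 < c.1 ∧
    ((IsEndpoint c.1 a ∧ IsEndpoint c.2 b) ∨ (IsEndpoint c.1 b ∧ IsEndpoint c.2 a))

/-- `c` is a Ptolemy arc of class II associated to the neighbouring arcs `a` and `b`:
the distance `1` is realised by endpoints `p` and `p - 1`, and `c` joins the endpoint of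
`a` other than `p, p-1` to the endpoint of `b` other than `p, p-1`. -/
def IsPtolemyII (a b c : Arc) : Prop :=
  ¬ Cross a b ∧
  ∃ p e f : ℤ,
    (((IsEndpoint p a ∧ IsEndpoint (p - 1) b) ∧ (IsEndpoint e a ∧ e ≠ p) ∧
        (IsEndpoint f b ∧ f ≠ p - 1)) ∨
     ((IsEndpoint p b ∧ IsEndpoint (p - 1) a) ∧ (IsEndpoint e b ∧ e ≠ p) ∧
        (IsEndpoint f a ∧ f ≠ p - 1))) ∧
    c = (max e f, min e f)

/-- `Y` is a set of `d`-admissible arcs closed under adjoining `d`-admissible Ptolemy arcs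
of classes I and II. -/
def PtolemyClosed (w : ℤ) (Y : Set Arc) : Prop :=
  (∀ a ∈ Y, IsAdmissible w a) ∧
  ∀ a ∈ Y, ∀ b ∈ Y, ∀ c : Arc,
    (IsPtolemyI a b c ∨ IsPtolemyII a b c) → IsAdmissible w c → c ∈ Y

/-- The Ptolemy closure of `X`: the smallest set of `d`-admissible arcs containing `X`
and closed under adjoining `d`-admissible Ptolemy arcs of classes I and II. -/
def PtolemyClosure (w : ℤ) (X : Set Arc) : Set Arc :=
  ⋂₀ {Y : Set Arc | X ⊆ Y ∧ PtolemyClosed w Y}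

/-- `p` is a left fountain of `A`: infinitely many arcs of `A` have source `p`. -/
def LeftFountain (A : Set Arc) (p : ℤ) : Prop := {a ∈ A | a.1 = p}.Infinite

/-- `p` is a right fountain of `A`: infinitely many arcs of `A` have target `p`. -/
def RightFountain (A : Set Arc) (p : ℤ) : Prop := {a ∈ A | a.2 = p}.Infinite

/-- The set `X_S = { (t + j, u + j) : (t,u) ∈ S, 0 ≤ j ≤ |w| - 1 }`, corresponding to the
union of the shifted copies `Σ^i S` for `w + 1 ≤ i ≤ 0`. -/
def ShiftFamily (w : ℤ) (S : Set Arc) : Set Arc :=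
  {c : Arc | ∃ a ∈ S, ∃ j : ℤ, 0 ≤ j ∧ j ≤ -w - 1 ∧ c = (a.1 + j, a.2 + j)}

/- ========== Auxiliary development for stmt_5 ========== -/

private lemma arc_proper {w : ℤ} (hw : w ≤ -1) {a : Arc} (h : IsAdmissible w a) :
    a.2 < a.1 := by
  have := h.1; omega

/-- The facts about a Hom configuration that the counting argument uses. -/
def GoodCfg (w : ℤ) (X : Set Arc) : Prop :=
  (∀ a ∈ X, a.2 < a.1) ∧
  (∀ a ∈ X, ∀ b ∈ X, a ≠ b → ¬ Cross a b) ∧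
  (∀ a ∈ X, {p : ℤ | InnerIsolatedOf X a p}.encard = ((-w - 1).toNat : ℕ∞))

lemma goodCfg_of_hom {w : ℤ} (hw : w ≤ -1) {X : Set Arc} (h : IsHomConfig w X) :
    GoodCfg w X :=
  ⟨fun a ha => arc_proper hw (h.1 a ha), h.2.1, h.2.2.1⟩

/-- Arcs of `X` whose footprint is contained in `[lo, hi]`. -/
def ArcsIn (X : Set Arc) (lo hi : ℤ) : Set Arc := {a ∈ X | lo ≤ a.2 ∧ a.1 ≤ hi}

/-- Points of `[lo, hi]` that are isolated and not covered by an arc inside the window. -/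
def FreeIn (X : Set Arc) (lo hi : ℤ) : Set ℤ :=
  {p | lo ≤ p ∧ p ≤ hi ∧ Isolated X p ∧ ∀ a ∈ ArcsIn X lo hi, ¬ OverarcOfVertex a p}

/-- Every arc of `X` is inside the window, disjoint from it, or strictly contains it. -/
def Trich (X : Set Arc) (lo hi : ℤ) : Prop :=
  ∀ b ∈ X, (lo ≤ b.2 ∧ b.1 ≤ hi) ∨ (b.1 < lo ∨ hi < b.2) ∨ (b.2 < lo ∧ hi < b.1)

lemma src_injOn {w : ℤ} {X : Set Arc} (hG : GoodCfg w X) :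
    Set.InjOn (fun a : Arc => a.1) X := by
  intro a ha b hb hab
  by_contra hne
  exact hG.2.1 a ha b hb hne (Or.inl (Or.inl hab))

lemma tgt_injOn {w : ℤ} {X : Set Arc} (hG : GoodCfg w X) :
    Set.InjOn (fun a : Arc => a.2) X := by
  intro a ha b hb hab
  by_contra hne
  exact hG.2.1 a ha b hb hne (Or.inl (Or.inr (Or.inr (Or.inr hab))))

lemma finite_src_in {w : ℤ} {X : Set Arc} (hG : GoodCfg w X) (l h : ℤ) :
    {b ∈ X | l ≤ b.1 ∧ b.1 ≤ h}.Finite := by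
  apply Set.Finite.of_finite_image (f := fun a : Arc => a.1)
  · apply (Set.finite_Icc l h).subset
    rintro x ⟨a, ⟨_, h1, h2⟩, rfl⟩
    exact ⟨h1, h2⟩
  · exact (src_injOn hG).mono (fun a ha => ha.1)

lemma finite_tgt_in {w : ℤ} {X : Set Arc} (hG : GoodCfg w X) (l h : ℤ) :
    {b ∈ X | l ≤ b.2 ∧ b.2 ≤ h}.Finite := by
  apply Set.Finite.of_finite_image (f := fun a : Arc => a.2)
  · apply (Set.finite_Icc l h).subset
    rintro x ⟨a, ⟨_, h1, h2⟩, rfl⟩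
    exact ⟨h1, h2⟩
  · exact (tgt_injOn hG).mono (fun a ha => ha.1)

lemma arcsIn_finite {w : ℤ} {X : Set Arc} (hG : GoodCfg w X) (lo hi : ℤ) :
    (ArcsIn X lo hi).Finite := by
  apply (finite_src_in hG lo hi).subset
  rintro a ⟨haX, h1, h2⟩
  have := hG.1 a haX
  exact ⟨haX, by omega, h2⟩

lemma freeIn_finite (X : Set Arc) (lo hi : ℤ) : (FreeIn X lo hi).Finite := by
  apply (Set.finite_Icc lo hi).subset
  rintro p ⟨h1, h2, _, _⟩
  exact ⟨h1, h2⟩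

lemma ncard_Icc_int (lo hi : ℤ) : (Set.Icc lo hi).ncard = (hi + 1 - lo).toNat := by
  rw [← Finset.coe_Icc, Set.ncard_coe_finset, Int.card_Icc]

lemma freeIn_of_no_arcs {w : ℤ} {X : Set Arc} (hG : GoodCfg w X) {lo hi : ℤ}
    (htr : Trich X lo hi) (hA : ArcsIn X lo hi = ∅) :
    FreeIn X lo hi = Set.Icc lo hi := by
  ext p
  simp only [FreeIn, Set.mem_setOf_eq, Set.mem_Icc]
  constructor
  · rintro ⟨h1, h2, _, _⟩; exact ⟨h1, h2⟩
  · rintro ⟨h1, h2⟩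
    refine ⟨h1, h2, ?_, ?_⟩
    · intro b hb hep
      have pb := hG.1 b hb
      rcases htr b hb with hin | hd | hc
      · have : b ∈ ArcsIn X lo hi := ⟨hb, hin⟩
        rw [hA] at this
        exact this
      · rcases hep with h | h <;> omega
      · rcases hep with h | h <;> omega
    · intro a haA
      rw [hA] at haA
      exact absurd haA (Set.notMem_empty a)

/-- The main counting lemma: for a window compatible with a good configuration,
`|W| = n·#(arcs inside W) + #(free points of W)` where `n = |w| + 1`. -/
lemma count {w : ℤ} (hw : w ≤ -1) {X : Set Arc} (hG : GoodCfg w X) :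
    ∀ N : ℕ, ∀ lo hi : ℤ, (hi + 1 - lo).toNat ≤ N → Trich X lo hi →
      (1 - w).toNat * (ArcsIn X lo hi).ncard + (FreeIn X lo hi).ncard
        = (hi + 1 - lo).toNat := by
  intro N
  induction N with
  | zero =>
      intro lo hi hsz htr
      have hA : ArcsIn X lo hi = ∅ := by
        ext a
        simp only [ArcsIn, Set.mem_setOf_eq, Set.mem_empty_iff_false, iff_false, not_and]
        intro haX h1
        have := hG.1 a haX
        omega
      rw [freeIn_of_no_arcs hG htr hA, hA, ncard_Icc_int]
      simp
  | succ N ih =>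
      intro lo hi hsz htr
      by_cases hA : ArcsIn X lo hi = ∅
      · rw [freeIn_of_no_arcs hG htr hA, hA, ncard_Icc_int]
        simp
      · obtain ⟨a, haA, hmax⟩ : ∃ a ∈ ArcsIn X lo hi,
            ∀ b ∈ ArcsIn X lo hi, b.1 - b.2 ≤ a.1 - a.2 := by
          have hfin := arcsIn_finite hG lo hi
          have hne : hfin.toFinset.Nonempty := by
            rw [Set.Finite.toFinset_nonempty]
            exact Set.nonempty_iff_ne_empty.mpr hA
          obtain ⟨a, haF, hmx⟩ := hfin.toFinset.exists_max_image (fun b => b.1 - b.2) hne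
          exact ⟨a, hfin.mem_toFinset.mp haF, fun b hb => hmx b (hfin.mem_toFinset.mpr hb)⟩
        obtain ⟨haX, hla, hah⟩ := haA
        have pa : a.2 < a.1 := hG.1 a haX
        have main : ∀ b ∈ X, b ≠ a →
            (lo ≤ b.2 ∧ b.1 ≤ a.2 - 1) ∨ (a.2 + 1 ≤ b.2 ∧ b.1 ≤ a.1 - 1)
            ∨ (a.1 + 1 ≤ b.2 ∧ b.1 ≤ hi) ∨ (b.1 < lo ∨ hi < b.2)
            ∨ (b.2 < lo ∧ hi < b.1) := by
          intro b hb hne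
          have pb := hG.1 b hb
          have hcr := hG.2.1 b hb a haX hne
          unfold Cross SharesEndpoint StrictCross at hcr
          rcases htr b hb with hin | hd | hc
          · have hlen := hmax b ⟨hb, hin⟩
            omega
          · omega
          · omega
        have htrL : Trich X lo (a.2 - 1) := by
          intro b hb
          rcases eq_or_ne b a with rfl | hne
          · omega
          · rcases main b hb hne with h | h | h | h | h <;> omega
        have htrM : Trich X (a.2 + 1) (a.1 - 1) := by
          intro b hb
          rcases eq_or_ne b a with rfl | hne
          · omega
          · rcases main b hb hne with h | h | h | h | h <;> omega
        have htrR : Trich X (a.1 + 1) hi := by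
          intro b hb
          rcases eq_or_ne b a with rfl | hne
          · omega
          · rcases main b hb hne with h | h | h | h | h <;> omega
        have cL := ih lo (a.2 - 1) (by omega) htrL
        have cM := ih (a.2 + 1) (a.1 - 1) (by omega) htrM
        have cR := ih (a.1 + 1) hi (by omega) htrR
        have hsplit : ArcsIn X lo hi
            = insert a (ArcsIn X lo (a.2 - 1)
                ∪ (ArcsIn X (a.2 + 1) (a.1 - 1) ∪ ArcsIn X (a.1 + 1) hi)) := by
          ext b
          simp only [ArcsIn, Set.mem_insert_iff, Set.mem_union, Set.mem_setOf_eq]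
          constructor
          · rintro ⟨hb, h1, h2⟩
            rcases eq_or_ne b a with rfl | hne
            · exact Or.inl rfl
            · have pb := hG.1 b hb
              rcases main b hb hne with h | h | h | h | h
              · exact Or.inr (Or.inl ⟨hb, h⟩)
              · exact Or.inr (Or.inr (Or.inl ⟨hb, h⟩))
              · exact Or.inr (Or.inr (Or.inr ⟨hb, h⟩))
              · exact absurd h (by omega)
              · exact absurd h (by omega)
          · rintro (rfl | ⟨hb, h1, h2⟩ | ⟨hb, h1, h2⟩ | ⟨hb, h1, h2⟩)
            · exact ⟨haX, hla, hah⟩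
            all_goals exact ⟨hb, by omega, by omega⟩
        have hnotmem : a ∉ ArcsIn X lo (a.2 - 1)
            ∪ (ArcsIn X (a.2 + 1) (a.1 - 1) ∪ ArcsIn X (a.1 + 1) hi) := by
          rintro (⟨_, h1, h2⟩ | ⟨_, h1, h2⟩ | ⟨_, h1, h2⟩) <;> omega
        have finL := arcsIn_finite hG lo (a.2 - 1)
        have finM := arcsIn_finite hG (a.2 + 1) (a.1 - 1)
        have finR := arcsIn_finite hG (a.1 + 1) hi
        have hdMR : Disjoint (ArcsIn X (a.2 + 1) (a.1 - 1)) (ArcsIn X (a.1 + 1) hi) := by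
          rw [Set.disjoint_left]
          rintro b ⟨hbX, h1, h2⟩ ⟨_, h3, h4⟩
          have := hG.1 b hbX
          omega
        have hdLMR : Disjoint (ArcsIn X lo (a.2 - 1))
            (ArcsIn X (a.2 + 1) (a.1 - 1) ∪ ArcsIn X (a.1 + 1) hi) := by
          rw [Set.disjoint_left]
          rintro b ⟨hbX, h1, h2⟩ (⟨_, h3, h4⟩ | ⟨_, h3, h4⟩) <;>
            have := hG.1 b hbX <;> omega
        have hAcard : (ArcsIn X lo hi).ncard
            = (ArcsIn X lo (a.2 - 1)).ncard + (ArcsIn X (a.2 + 1) (a.1 - 1)).ncard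
              + (ArcsIn X (a.1 + 1) hi).ncard + 1 := by
          rw [hsplit, Set.ncard_insert_of_notMem hnotmem (finL.union (finM.union finR)),
            Set.ncard_union_eq hdLMR finL (finM.union finR),
            Set.ncard_union_eq hdMR finM finR]
          ring
        have hfsplit : FreeIn X lo hi = FreeIn X lo (a.2 - 1) ∪ FreeIn X (a.1 + 1) hi := by
          ext p
          simp only [FreeIn, Set.mem_union, Set.mem_setOf_eq]
          constructor
          · rintro ⟨h1, h2, hiso, hnc⟩
            have hpa1 : p ≠ a.1 := fun h => hiso a haX (Or.inl h)
            have hpa2 : p ≠ a.2 := fun h => hiso a haX (Or.inr h)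
            have hnotin : ¬ (a.2 < p ∧ p < a.1) := fun h => hnc a ⟨haX, hla, hah⟩ h
            rcases (by omega : p ≤ a.2 - 1 ∨ a.1 + 1 ≤ p) with hp | hp
            · left
              refine ⟨h1, hp, hiso, ?_⟩
              rintro b ⟨hbX, hb1, hb2⟩ hov
              exact hnc b ⟨hbX, hb1, by omega⟩ hov
            · right
              refine ⟨hp, h2, hiso, ?_⟩
              rintro b ⟨hbX, hb1, hb2⟩ hov
              exact hnc b ⟨hbX, by omega, hb2⟩ hov
          · rintro (⟨h1, h2, hiso, hnc⟩ | ⟨h1, h2, hiso, hnc⟩)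
            · refine ⟨h1, by omega, hiso, ?_⟩
              intro b hbA hov
              obtain ⟨hov1, hov2⟩ := hov
              have hb' := hbA
              rw [hsplit] at hb'
              rcases hb' with rfl | hb' | hb' | hb'
              · omega
              · exact hnc b hb' ⟨hov1, hov2⟩
              · obtain ⟨_, h3, h4⟩ := hb'; omega
              · obtain ⟨_, h3, h4⟩ := hb'; omega
            · refine ⟨by omega, h2, hiso, ?_⟩
              intro b hbA hov
              obtain ⟨hov1, hov2⟩ := hov
              have hb' := hbA
              rw [hsplit] at hb'
              rcases hb' with rfl | hb' | hb' | hb'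
              · omega
              · obtain ⟨_, h3, h4⟩ := hb'; omega
              · obtain ⟨_, h3, h4⟩ := hb'; omega
              · exact hnc b hb' ⟨hov1, hov2⟩
        have hfmid : FreeIn X (a.2 + 1) (a.1 - 1) = {p : ℤ | InnerIsolatedOf X a p} := by
          ext p
          simp only [FreeIn, Set.mem_setOf_eq]
          constructor
          · rintro ⟨h1, h2, hiso, hnc⟩
            refine ⟨hiso, ⟨by omega, by omega⟩, ?_⟩
            intro c hc hov hcv
            obtain ⟨ho1, ho2, ho3⟩ := hov
            exact hnc c ⟨hc, by omega, by omega⟩ hcv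
          · rintro ⟨hiso, ⟨hv1, hv2⟩, hmin⟩
            refine ⟨by omega, by omega, hiso, ?_⟩
            rintro c ⟨hcX, hc1, hc2⟩ hcv
            have pc := hG.1 c hcX
            exact hmin c hcX ⟨by omega, by omega, by omega⟩ hcv
        have hdF : Disjoint (FreeIn X lo (a.2 - 1)) (FreeIn X (a.1 + 1) hi) := by
          rw [Set.disjoint_left]
          rintro p ⟨h1, h2, _, _⟩ ⟨h3, h4, _, _⟩
          omega
        have hFcard : (FreeIn X lo hi).ncard
            = (FreeIn X lo (a.2 - 1)).ncard + (FreeIn X (a.1 + 1) hi).ncard := by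
          rw [hfsplit, Set.ncard_union_eq hdF (freeIn_finite X lo (a.2 - 1))
            (freeIn_finite X (a.1 + 1) hi)]
        have hfI : (FreeIn X (a.2 + 1) (a.1 - 1)).ncard = (-w - 1).toNat := by
          rw [hfmid, Set.ncard_def, hG.2.2 a haX, ENat.toNat_coe]
        rw [hAcard, hFcard]
        have expand : (1 - w).toNat * ((ArcsIn X lo (a.2 - 1)).ncard
              + (ArcsIn X (a.2 + 1) (a.1 - 1)).ncard + (ArcsIn X (a.1 + 1) hi).ncard + 1)
            = (1 - w).toNat * (ArcsIn X lo (a.2 - 1)).ncard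
              + (1 - w).toNat * (ArcsIn X (a.2 + 1) (a.1 - 1)).ncard
              + (1 - w).toNat * (ArcsIn X (a.1 + 1) hi).ncard + (1 - w).toNat := by
          ring
        rw [expand]
        omega

/-- Bound on free points of a window:  at most `|w| = n - 1` of them. -/
lemma free_bound {w : ℤ} (hw : w ≤ -1) {X : Set Arc} (hHom : IsHomConfig w X)
    {lo hi : ℤ} (hlh : lo ≤ hi) (htr : Trich X lo hi) :
    (FreeIn X lo hi).ncard + 1 ≤ (1 - w).toNat := by
  have hG := goodCfg_of_hom hw hHom
  by_cases hC : ∃ b ∈ X, b.2 < lo ∧ hi < b.1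
  · obtain ⟨b, ⟨hbX, hb1, hb2⟩, hbmin⟩ :
        ∃ b, (b ∈ X ∧ b.2 < lo ∧ hi < b.1) ∧
          ∀ c, (c ∈ X ∧ c.2 < lo ∧ hi < c.1) → (b.1 - b.2).toNat ≤ (c.1 - c.2).toNat := by
      obtain ⟨b0, hb0X, hb0a, hb0b⟩ := hC
      have hne : ((fun c : Arc => (c.1 - c.2).toNat) ''
          {c : Arc | c ∈ X ∧ c.2 < lo ∧ hi < c.1}).Nonempty :=
        ⟨_, Set.mem_image_of_mem _ (show b0 ∈ _ from ⟨hb0X, hb0a, hb0b⟩)⟩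
      obtain ⟨b, hbmem, hbval⟩ := Nat.sInf_mem hne
      refine ⟨b, hbmem, ?_⟩
      intro c hc
      exact le_trans (le_of_eq hbval) (Nat.sInf_le (Set.mem_image_of_mem _ hc))
    have hsub : FreeIn X lo hi ⊆ {p : ℤ | InnerIsolatedOf X b p} := by
      intro p hp
      obtain ⟨hp1, hp2, hiso, hnc⟩ := hp
      refine ⟨hiso, ⟨by omega, by omega⟩, ?_⟩
      intro c hcX hover hcov
      obtain ⟨ho1, ho2, ho3⟩ := hover
      obtain ⟨hv1, hv2⟩ := hcov
      rcases htr c hcX with hin | hd | hcont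
      · exact hnc c ⟨hcX, hin⟩ ⟨hv1, hv2⟩
      · omega
      · have := hbmin c ⟨hcX, hcont.1, hcont.2⟩
        omega
    have hcardb := hHom.2.2.1 b hbX
    have hfinb : {p : ℤ | InnerIsolatedOf X b p}.Finite := by
      rw [← Set.encard_lt_top_iff, hcardb]
      exact ENat.coe_lt_top _
    have h1 := Set.ncard_le_ncard hsub hfinb
    have h2 : {p : ℤ | InnerIsolatedOf X b p}.ncard = (-w - 1).toNat := by
      rw [Set.ncard_def, hcardb, ENat.toNat_coe]
    omega
  · push_neg at hC
    have hsub : FreeIn X lo hi ⊆ {p : ℤ | OuterIsolated X p} := by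
      intro p hp
      obtain ⟨hp1, hp2, hiso, hnc⟩ := hp
      refine ⟨hiso, ?_⟩
      intro c hcX hcov
      obtain ⟨hv1, hv2⟩ := hcov
      rcases htr c hcX with hin | hd | hcont
      · exact hnc c ⟨hcX, hin⟩ ⟨hv1, hv2⟩
      · omega
      · have := hC c hcX hcont.1
        omega
    have hOuter := hHom.2.2.2
    have hfinO : {p : ℤ | OuterIsolated X p}.Finite := by
      rw [← Set.encard_lt_top_iff]
      exact lt_of_le_of_lt hOuter (ENat.coe_lt_top _)
    have h1 := Set.ncard_le_ncard hsub hfinO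
    have h2 : {p : ℤ | OuterIsolated X p}.ncard ≤ (-w).toNat := by
      rw [Set.ncard_def]
      exact ENat.toNat_le_of_le_coe hOuter
    omega

/-- Existence of an aligned window containing a given interval. -/
lemma window {w : ℤ} {X : Set Arc} (hG : GoodCfg w X) (lo0 hi0 : ℤ) :
    ∃ lo hi : ℤ, lo ≤ lo0 ∧ hi0 ≤ hi ∧ Trich X lo hi := by
  classical
  have hfin1 : {b ∈ X | lo0 ≤ b.1 ∧ b.1 ≤ hi0}.Finite := finite_src_in hG lo0 hi0
  set t1 : Finset ℤ := insert lo0 (hfin1.toFinset.image (fun b => b.2)) with ht1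
  have ht1ne : t1.Nonempty := ⟨lo0, Finset.mem_insert_self _ _⟩
  set lo := t1.min' ht1ne with hlodef
  have hlo0 : lo ≤ lo0 := Finset.min'_le _ _ (Finset.mem_insert_self _ _)
  have hA1 : ∀ b ∈ X, lo0 ≤ b.1 → b.1 ≤ hi0 → lo ≤ b.2 := by
    intro b hb h1 h2
    exact Finset.min'_le _ _ (Finset.mem_insert_of_mem
      (Finset.mem_image_of_mem _ (hfin1.mem_toFinset.mpr ⟨hb, h1, h2⟩)))
  have hAeq : lo = lo0 ∨ ∃ b1 ∈ X, lo0 ≤ b1.1 ∧ b1.1 ≤ hi0 ∧ b1.2 = lo := by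
    have hmem := t1.min'_mem ht1ne
    rcases Finset.mem_insert.mp hmem with h | h
    · exact Or.inl h
    · right
      obtain ⟨b1, hb1, hb1e⟩ := Finset.mem_image.mp h
      rw [Set.Finite.mem_toFinset] at hb1
      exact ⟨b1, hb1.1, hb1.2.1, hb1.2.2, hb1e⟩
  have hfin2 : {b ∈ X | lo ≤ b.2 ∧ b.2 ≤ hi0}.Finite := finite_tgt_in hG lo hi0
  set t2 : Finset ℤ := insert hi0 (hfin2.toFinset.image (fun b => b.1)) with ht2
  have ht2ne : t2.Nonempty := ⟨hi0, Finset.mem_insert_self _ _⟩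
  set hi := t2.max' ht2ne with hhidef
  have hhi0 : hi0 ≤ hi := Finset.le_max' _ _ (Finset.mem_insert_self _ _)
  have hB1 : ∀ b ∈ X, lo ≤ b.2 → b.2 ≤ hi0 → b.1 ≤ hi := by
    intro b hb h1 h2
    exact Finset.le_max' _ _ (Finset.mem_insert_of_mem
      (Finset.mem_image_of_mem _ (hfin2.mem_toFinset.mpr ⟨hb, h1, h2⟩)))
  have hBeq : hi = hi0 ∨ ∃ b2 ∈ X, lo ≤ b2.2 ∧ b2.2 ≤ hi0 ∧ b2.1 = hi := by
    have hmem := t2.max'_mem ht2ne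
    rcases Finset.mem_insert.mp hmem with h | h
    · exact Or.inl h
    · right
      obtain ⟨b2, hb2, hb2e⟩ := Finset.mem_image.mp h
      rw [Set.Finite.mem_toFinset] at hb2
      exact ⟨b2, hb2.1, hb2.2.1, hb2.2.2, hb2e⟩
  refine ⟨lo, hi, hlo0, hhi0, ?_⟩
  intro b hb
  by_contra hcon
  have pb := hG.1 b hb
  have hcut : (b.2 < lo ∧ lo ≤ b.1 ∧ b.1 ≤ hi) ∨ (lo ≤ b.2 ∧ b.2 ≤ hi ∧ hi < b.1) := by
    omega
  rcases hcut with ⟨h1, h2, h3⟩ | ⟨h1, h2, h3⟩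
  · rcases le_or_gt b.1 hi0 with h4 | h4
    · rcases le_or_gt lo0 b.1 with h5 | h5
      · have := hA1 b hb h5 h4
        omega
      · rcases hAeq with h6 | ⟨b1, hb1X, h7, h8, h9⟩
        · omega
        · have hne : b ≠ b1 := by
            intro h
            rw [h] at h1
            omega
          have hcr := hG.2.1 b hb b1 hb1X hne
          have pb1 := hG.1 b1 hb1X
          unfold Cross SharesEndpoint StrictCross at hcr
          omega
    · rcases hBeq with h6 | ⟨b2, hb2X, h7, h8, h9⟩
      · omega
      · have hne : b ≠ b2 := by
          intro h
          rw [h] at h1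
          omega
        have hcr := hG.2.1 b hb b2 hb2X hne
        have pb2 := hG.1 b2 hb2X
        unfold Cross SharesEndpoint StrictCross at hcr
        omega
  · rcases le_or_gt b.2 hi0 with h4 | h4
    · have := hB1 b hb h1 h4
      omega
    · rcases hBeq with h6 | ⟨b2, hb2X, h7, h8, h9⟩
      · omega
      · have hne : b ≠ b2 := by
          intro h
          rw [h] at h3
          omega
        have hcr := hG.2.1 b hb b2 hb2X hne
        have pb2 := hG.1 b2 hb2X
        unfold Cross SharesEndpoint StrictCross at hcr
        omega

lemma nat_solve (n AT AU f1 f2 tot : ℕ)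
    (h1 : n * (AT + 1) + f1 = tot) (h2 : n * (AT + AU) + f2 = tot)
    (hf1 : f1 + 1 ≤ n) (hf2 : f2 + 1 ≤ n) : AU = 1 := by
  by_contra hne
  rcases Nat.lt_or_ge AU 1 with h | h
  · have h0 : AU = 0 := by omega
    subst h0
    rw [Nat.add_zero] at h2
    rw [Nat.mul_add, Nat.mul_one] at h1
    omega
  · obtain ⟨k, rfl⟩ : ∃ k, AU = k + 2 := ⟨AU - 2, by omega⟩
    rw [Nat.mul_add, Nat.mul_one] at h1
    rw [Nat.mul_add, Nat.mul_add] at h2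
    have e2 : n * 2 = n + n := by ring
    rw [e2] at h2
    omega
/-- if `S` is a combinatorial `w`-Hom configuration, `s ∈ S`, and `U` is a
set of `d`-admissible arcs disjoint from `S \ {s}` such that `(S \ {s}) ∪ U` is a
combinatorial `w`-Hom configuration, then `U` consists of exactly one arc. -/
theorem stmt_5 (w : ℤ) (hw : w ≤ -1) (S : Set Arc) (hS : IsHomConfig w S)
    (s : Arc) (hs : s ∈ S) (U : Set Arc) (hUadm : ∀ a ∈ U, IsAdmissible w a)
    (hdisj : U ∩ (S \ {s}) = ∅) (hU : IsHomConfig w ((S \ {s}) ∪ U)) :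
    ∃ a : Arc, U = {a} := by
  have hG1 : GoodCfg w S := goodCfg_of_hom hw hS
  have hG2 : GoodCfg w ((S \ {s}) ∪ U) := goodCfg_of_hom hw hU
  have ps : s.2 < s.1 := hG1.1 s hs
  have key : ∀ lo hi : ℤ, lo ≤ s.2 → s.1 ≤ hi → Trich ((S \ {s}) ∪ U) lo hi →
      (ArcsIn U lo hi).ncard = 1 := by
    intro lo hi hlo hhi htr2
    have htr1 : Trich S lo hi := by
      intro b hb
      rcases eq_or_ne b s with rfl | hne
      · exact Or.inl ⟨hlo, hhi⟩
      · exact htr2 b (Or.inl ⟨hb, hne⟩)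
    have c1 := count hw hG1 (hi + 1 - lo).toNat lo hi le_rfl htr1
    have c2 := count hw hG2 (hi + 1 - lo).toNat lo hi le_rfl htr2
    have hlh : lo ≤ hi := by omega
    have fb1 := free_bound hw hS hlh htr1
    have fb2 := free_bound hw hU hlh htr2
    have hs1 : ArcsIn S lo hi = insert s (ArcsIn (S \ {s}) lo hi) := by
      ext b
      simp only [ArcsIn, Set.mem_insert_iff, Set.mem_setOf_eq, Set.mem_diff,
        Set.mem_singleton_iff]
      constructor
      · rintro ⟨hb, h1, h2⟩
        rcases eq_or_ne b s with rfl | hne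
        · exact Or.inl rfl
        · exact Or.inr ⟨⟨hb, hne⟩, h1, h2⟩
      · rintro (rfl | ⟨⟨hb, _⟩, h1, h2⟩)
        · exact ⟨hs, hlo, hhi⟩
        · exact ⟨hb, h1, h2⟩
    have hs2 : ArcsIn ((S \ {s}) ∪ U) lo hi = ArcsIn (S \ {s}) lo hi ∪ ArcsIn U lo hi := by
      ext b
      simp only [ArcsIn, Set.mem_union, Set.mem_setOf_eq]
      tauto
    have hfinT : (ArcsIn (S \ {s}) lo hi).Finite :=
      (arcsIn_finite hG2 lo hi).subset (fun b hb => ⟨Or.inl hb.1, hb.2⟩)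
    have hfinU : (ArcsIn U lo hi).Finite :=
      (arcsIn_finite hG2 lo hi).subset (fun b hb => ⟨Or.inr hb.1, hb.2⟩)
    have hsmem : s ∉ ArcsIn (S \ {s}) lo hi := fun h => h.1.2 rfl
    have hdisjTU : Disjoint (ArcsIn (S \ {s}) lo hi) (ArcsIn U lo hi) := by
      rw [Set.disjoint_left]
      intro b hbT hbU
      have hmem : b ∈ U ∩ (S \ {s}) := ⟨hbU.1, hbT.1⟩
      rw [hdisj] at hmem
      exact hmem
    rw [hs1, Set.ncard_insert_of_notMem hsmem hfinT] at c1
    rw [hs2, Set.ncard_union_eq hdisjTU hfinT hfinU] at c2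
    exact nat_solve ((1 - w).toNat) ((ArcsIn (S \ {s}) lo hi).ncard)
      ((ArcsIn U lo hi).ncard) ((FreeIn S lo hi).ncard)
      ((FreeIn ((S \ {s}) ∪ U) lo hi).ncard) ((hi + 1 - lo).toNat) c1 c2 fb1 fb2
  obtain ⟨lo, hi, hlo, hhi, htr⟩ := window hG2 s.2 s.1
  have h1 := key lo hi hlo hhi htr
  obtain ⟨u0, hu0⟩ := Set.ncard_eq_one.mp h1
  have hu0A : u0 ∈ ArcsIn U lo hi := by
    rw [hu0]
    exact Set.mem_singleton u0
  have hu0U : u0 ∈ U := hu0A.1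
  refine ⟨u0, ?_⟩
  apply Set.eq_singleton_iff_unique_mem.mpr
  refine ⟨hu0U, ?_⟩
  intro u' hu'
  have pu' : u'.2 < u'.1 := hG2.1 u' (Or.inr hu')
  have pu0 : u0.2 < u0.1 := hG2.1 u0 (Or.inr hu0U)
  obtain ⟨lo', hi', hlo', hhi', htr'⟩ :=
    window hG2 (min s.2 (min u0.2 u'.2)) (max s.1 (max u0.1 u'.1))
  have hls : lo' ≤ s.2 := le_trans hlo' (min_le_left _ _)
  have hl0 : lo' ≤ u0.2 := le_trans hlo' (le_trans (min_le_right _ _) (min_le_left _ _))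
  have hl' : lo' ≤ u'.2 := le_trans hlo' (le_trans (min_le_right _ _) (min_le_right _ _))
  have hhs : s.1 ≤ hi' := le_trans (le_max_left _ _) hhi'
  have hh0 : u0.1 ≤ hi' := le_trans (le_trans (le_max_left _ _) (le_max_right _ _)) hhi'
  have hh' : u'.1 ≤ hi' := le_trans (le_trans (le_max_right _ _) (le_max_right _ _)) hhi'
  have h2 := key lo' hi' hls hhs htr'
  obtain ⟨u1, hu1⟩ := Set.ncard_eq_one.mp h2
  have e0 : u0 = u1 := by
    have hm : u0 ∈ ArcsIn U lo' hi' := ⟨hu0U, hl0, hh0⟩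
    rw [hu1] at hm
    exact hm
  have e' : u' = u1 := by
    have hm : u' ∈ ArcsIn U lo' hi' := ⟨hu', hl', hh'⟩
    rw [hu1] at hm
    exact hm
  rw [e', ← e0]
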